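/- For k > 0 with k ≠ 1 and g₁, g₂ > 0, if z₁ solves z' = -z + g₁·ω·f(z) then z₂(t) := (g₁/g₂)^{1/(k-1)} z₁(t) solves z' = -z + g₂·ω·f(z); hence solutions at any two positive coupling strengths are related by a fixed positive scalar multiple. -/

import Mathlib

noncomputable def tpl (k : ℝ) (z : ℝ) : ℝ := if 0 < z then z ^ k else 0

noncomputable def tplV {N : ℕ} (k : ℝ) (z : Fin N → ℝ) : Fin N → ℝ := fun i => tpl k (z i)

/-! The threshold power law is positively homogeneous of degree `k`, so scaling a solution by
`c > 0` multiplies the linear term by `c` and the coupling term by `c ^ k`. The two balance exactly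
when `g₂ c ^ k = g₁ c`, i.e. `c ^ (k - 1) = g₁ / g₂`, which is solvable because `k ≠ 1`. -/

lemma tpl_mul_of_pos (k : ℝ) {c : ℝ} (hc : 0 < c) (x : ℝ) : tpl k (c * x) = c ^ k * tpl k x := by
  unfold tpl
  by_cases hx : 0 < x
  · rw [if_pos (mul_pos hc hx), if_pos hx, Real.mul_rpow hc.le hx.le]
  · rw [if_neg hx, if_neg (not_lt.2 (mul_nonpos_of_nonneg_of_nonpos hc.le (not_lt.1 hx))),
      mul_zero]

lemma tplV_smul_of_pos {N : ℕ} (k : ℝ) {c : ℝ} (hc : 0 < c) (z : Fin N → ℝ) :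
    tplV k (c • z) = c ^ k • tplV k z :=
  funext fun i => tpl_mul_of_pos k hc (z i)

lemma rpow_one_div_sub_one_rpow {a k : ℝ} (ha : 0 < a) (hk : k ≠ 1) :
    (a ^ (1 / (k - 1))) ^ k = a * a ^ (1 / (k - 1)) := by
  have hk' : k - 1 ≠ 0 := sub_ne_zero.2 hk
  calc (a ^ (1 / (k - 1))) ^ k = a ^ (1 / (k - 1) * (k - 1) + 1 / (k - 1)) := by
        rw [← Real.rpow_mul ha.le]; ring_nf
    _ = a * a ^ (1 / (k - 1)) := by
        rw [one_div_mul_cancel hk', Real.rpow_add ha, Real.rpow_one]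

lemma smul_neg_add_smul_mulVec_tplV {N : ℕ} (ω : Matrix (Fin N) (Fin N) ℝ) (k : ℝ) {g₁ g₂ c : ℝ}
    (hc : 0 < c) (hbalance : g₂ * c ^ k = g₁ * c) (z : Fin N → ℝ) :
    c • (-z + g₁ • ω.mulVec (tplV k z)) = -(c • z) + g₂ • ω.mulVec (tplV k (c • z)) := by
  rw [tplV_smul_of_pos k hc, Matrix.mulVec_smul, smul_add, smul_neg, smul_smul, smul_smul,
    hbalance, mul_comm]

theorem stmt15_general (N : ℕ) (ω : Matrix (Fin N) (Fin N) ℝ) (k g₁ g₂ : ℝ)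
    (hk1 : k ≠ 1) (hg₁ : 0 < g₁) (hg₂ : 0 < g₂)
    (z₁ : ℝ → (Fin N → ℝ))
    (hz : ∀ t, HasDerivAt z₁ (-z₁ t + g₁ • ω.mulVec (tplV k (z₁ t))) t) :
    ∀ t, HasDerivAt (fun t => (g₁/g₂) ^ ((1:ℝ)/(k-1)) • z₁ t)
      (-((g₁/g₂) ^ ((1:ℝ)/(k-1)) • z₁ t) +
        g₂ • ω.mulVec (tplV k ((g₁/g₂) ^ ((1:ℝ)/(k-1)) • z₁ t))) t := by
  intro t
  have hratio : 0 < g₁ / g₂ := div_pos hg₁ hg₂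
  have hbalance : g₂ * ((g₁ / g₂) ^ (1 / (k - 1))) ^ k = g₁ * (g₁ / g₂) ^ (1 / (k - 1)) := by
    rw [rpow_one_div_sub_one_rpow hratio hk1, ← mul_assoc, mul_div_cancel₀ _ hg₂.ne']
  rw [← smul_neg_add_smul_mulVec_tplV ω k (Real.rpow_pos_of_pos hratio _) hbalance]
  exact (hz t).const_smul ((g₁ / g₂) ^ (1 / (k - 1)))

theorem stmt15 (N : ℕ) (ω : Matrix (Fin N) (Fin N) ℝ) (k g₁ g₂ : ℝ)
    (hk : 0 < k) (hk1 : k ≠ 1) (hg₁ : 0 < g₁) (hg₂ : 0 < g₂)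
    (z₁ : ℝ → (Fin N → ℝ))
    (hz : ∀ t, HasDerivAt z₁ (-z₁ t + g₁ • ω.mulVec (tplV k (z₁ t))) t) :
    ∀ t, HasDerivAt (fun t => (g₁/g₂) ^ ((1:ℝ)/(k-1)) • z₁ t)
      (-((g₁/g₂) ^ ((1:ℝ)/(k-1)) • z₁ t) +
        g₂ • ω.mulVec (tplV k ((g₁/g₂) ^ ((1:ℝ)/(k-1)) • z₁ t))) t :=
  stmt15_general N ω k g₁ g₂ hk1 hg₁ hg₂ z₁ hz
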